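/- Let δ = δ_0 + uδ_1 + ⋯ + u^{t−1}δ_{t−1} ∈ R^t be a unit such that δ_k ≠ 0 for some 1 ≤ k ≤ t−1, and let k be the smallest such index. Then the element x^n − δ_{0,0} of R^{t,n}_δ is nilpotent with nilpotency index ⌈t/k⌉·p^s; that is, (x^n − δ_{0,0})^{⌈t/k⌉p^s} = 0 and (x^n − δ_{0,0})^{⌈t/k⌉p^s − 1} ≠ 0 in R^{t,n}_δ. -/

import Mathlib

/-!
In characteristic `p`, `(xⁿ - δ₀₀)^{p^s} = x^{np^s} - δ₀ = δ - δ₀` in `R^{t,n}_δ`, and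
`δ - δ₀ = u^k ε` with `ε` a unit of `R^t`, so `(xⁿ - δ₀₀)^{jp^s} = u^{kj} εʲ` vanishes
exactly when `kj ≥ t`. For an exponent `jp^s + r` with `r < p^s`, the power is represented
by `u^{kj} εʲ (xⁿ - δ₀₀)^r`, a polynomial of degree `< np^s` with leading coefficient
`u^{kj} εʲ`; it is divisible by the monic `x^{np^s} - δ` only if it is zero. Hence the
nilpotency index is `p^s` times the least `j` with `kj ≥ t`, which is `⌈t/k⌉`.
-/

open Polynomial

/-- The finite chain ring `R^t = 𝔽_{p^m}[u]/⟨u^t⟩`. -/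
abbrev Rt (p m t : ℕ) [Fact p.Prime] : Type _ :=
  Polynomial (GaloisField p m) ⧸ Ideal.span {(X : Polynomial (GaloisField p m)) ^ t}

noncomputable instance (p m t : ℕ) [Fact p.Prime] : CommRing (Rt p m t) := Ideal.Quotient.commRing _

/-- The canonical projection `𝔽_{p^m}[u] → R^t`. -/
noncomputable def mkRt (p m t : ℕ) [Fact p.Prime] :
    Polynomial (GaloisField p m) →+* Rt p m t :=
  Ideal.Quotient.mk _

/-- The element `u ∈ R^t`. -/
noncomputable def uRt (p m t : ℕ) [Fact p.Prime] : Rt p m t := mkRt p m t X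

/-- The canonical embedding `𝔽_{p^m} → R^t`. -/
noncomputable def κ (p m t : ℕ) [Fact p.Prime] : GaloisField p m →+* Rt p m t :=
  (mkRt p m t).comp (C : GaloisField p m →+* Polynomial (GaloisField p m))

/-- The quotient ring `R^t[x]/⟨x^N − δ⟩`. -/
abbrev Qr (p m t : ℕ) [Fact p.Prime] (N : ℕ) (δ : Rt p m t) : Type _ :=
  Polynomial (Rt p m t) ⧸ Ideal.span {(X : Polynomial (Rt p m t)) ^ N - C δ}

/-- The canonical projection `R^t[x] → R^t[x]/⟨x^N − δ⟩`. -/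
noncomputable def mkQr (p m t : ℕ) [Fact p.Prime] (N : ℕ) (δ : Rt p m t) :
    Polynomial (Rt p m t) →+* Qr p m t N δ :=
  Ideal.Quotient.mk _

variable {A K : Type*}

section QuotientXPowSubC

variable [CommRing A] (p : ℕ) [Fact p.Prime] [CharP A p]

theorem mk_X_pow_sub_C_pow_char_pow (n s : ℕ) (a b : A) :
    Ideal.Quotient.mk (Ideal.span {X ^ (n * p ^ s) - C a}) (X ^ n - C b) ^ p ^ s =
      Ideal.Quotient.mk _ (C (a - b ^ p ^ s)) := by
  have hrel : Ideal.Quotient.mk (Ideal.span {X ^ (n * p ^ s) - C a}) (X ^ (n * p ^ s) - C a) = 0 :=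
    Ideal.Quotient.eq_zero_iff_mem.mpr (Ideal.mem_span_singleton_self _)
  rw [← map_pow, sub_pow_char_pow, ← pow_mul, ← C_pow,
    show X ^ (n * p ^ s) - C (b ^ p ^ s) = X ^ (n * p ^ s) - C a + C (a - b ^ p ^ s) by
      rw [C_sub]; ring,
    map_add, hrel, zero_add]

theorem mk_X_pow_sub_C_pow_eq_zero_iff {n s : ℕ} (hn : 0 < n) (a b : A) {j r : ℕ}
    (hr : r < p ^ s) :
    Ideal.Quotient.mk (Ideal.span {X ^ (n * p ^ s) - C a}) (X ^ n - C b) ^ (j * p ^ s + r) = 0 ↔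
      (a - b ^ p ^ s) ^ j = 0 := by
  have := CharP.nontrivial_of_char_ne_one (R := A) (Fact.out : p.Prime).ne_one
  have hg : (X ^ n - C b : A[X]).Monic := monic_X_pow_sub_C b hn.ne'
  have hf : (X ^ (n * p ^ s) - C a : A[X]).Monic :=
    monic_X_pow_sub_C a (Nat.mul_ne_zero hn.ne' (pow_ne_zero _ (Fact.out : p.Prime).ne_zero))
  rw [pow_add, pow_mul' (Ideal.Quotient.mk _ (X ^ n - C b)) j, mk_X_pow_sub_C_pow_char_pow]
  simp only [← map_pow, ← map_mul, Ideal.Quotient.eq_zero_iff_mem, Ideal.mem_span_singleton]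
  refine ⟨fun hdvd => by_contra fun hw => hf.not_dvd_of_natDegree_lt ?_ ?_ hdvd, fun hw => ?_⟩
  · rwa [Ne, (hg.pow r).mul_left_eq_zero_iff, C_eq_zero]
  · calc _ ≤ ((X ^ n - C b) ^ r).natDegree := natDegree_C_mul_le _ _
      _ = r * n := by rw [hg.natDegree_pow, natDegree_X_pow_sub_C]
      _ < n * p ^ s := by rw [mul_comm]; exact Nat.mul_lt_mul_of_pos_left hr hn
      _ = _ := natDegree_X_pow_sub_C.symm
  · rw [hw, C_0, zero_mul]
    exact dvd_zero _

end QuotientXPowSubC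

section TruncatedPolynomial

theorem isUnit_mk_of_isUnit_coeff_zero [CommRing K] {t : ℕ} {q : K[X]} (hq : IsUnit (q.coeff 0)) :
    IsUnit (Ideal.Quotient.mk (Ideal.span {(X : K[X]) ^ t}) q) := by
  obtain ⟨r, hr⟩ : X ∣ q - C (q.coeff 0) := by simp [X_dvd_iff]
  rw [← sub_add_cancel q (C (q.coeff 0)), hr, map_add, add_comm]
  refine IsNilpotent.isUnit_add_left_of_commute ⟨t, ?_⟩ ((hq.map C).map _) (Commute.all _ _)
  rw [← map_pow, mul_pow, map_mul,
    Ideal.Quotient.eq_zero_iff_mem.mpr (Ideal.mem_span_singleton_self _), zero_mul]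

variable [CommRing K] [IsDomain K] {t : ℕ}

theorem mk_X_pow_eq_zero_iff {j : ℕ} :
    Ideal.Quotient.mk (Ideal.span {(X : K[X]) ^ t}) (X ^ j) = 0 ↔ t ≤ j := by
  rw [Ideal.Quotient.eq_zero_iff_mem, Ideal.mem_span_singleton,
    pow_dvd_pow_iff X_ne_zero not_isUnit_X]

theorem mk_X_pow_mul_pow_eq_zero_iff {k : ℕ} {q : K[X]} (hq : IsUnit (q.coeff 0)) {j : ℕ} :
    Ideal.Quotient.mk (Ideal.span {(X : K[X]) ^ t}) (X ^ k * q) ^ j = 0 ↔ t ≤ k * j := by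
  rw [map_mul, mul_pow, ((isUnit_mk_of_isUnit_coeff_zero hq).pow j).mul_left_eq_zero, ← map_pow,
    ← pow_mul, mk_X_pow_eq_zero_iff]

end TruncatedPolynomial

theorem charP_quotient_span_X_pow [Field K] (p : ℕ) [CharP K p] {t : ℕ} (ht : t ≠ 0) :
    CharP (K[X] ⧸ Ideal.span {(X : K[X]) ^ t}) p :=
  have : Nontrivial (K[X] ⧸ Ideal.span {(X : K[X]) ^ t}) :=
    nontrivial_of_ne _ _ (mt mk_X_pow_eq_zero_iff.mp (by omega) : Ideal.Quotient.mk _ (X ^ 0) ≠ 0)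
  charP_of_injective_algebraMap (algebraMap K _).injective p

theorem sum_C_mul_X_pow_sub_C_eq_X_pow_mul [CommRing K] (c : ℕ → K) {t k : ℕ} (hk : 0 < k)
    (hkt : k < t) (hmin : ∀ j, 1 ≤ j → j < k → c j = 0) :
    ∃ q : K[X], ∑ i ∈ Finset.range t, C (c i) * X ^ i - C (c 0) = X ^ k * q ∧ q.coeff 0 = c k := by
  have hcoeff (d : ℕ) :
      (∑ i ∈ Finset.range t, C (c i) * X ^ i).coeff d = if d < t then c d else 0 := by
    simp [finsetSum_coeff]
  obtain ⟨q, hq⟩ : X ^ k ∣ ∑ i ∈ Finset.range t, C (c i) * X ^ i - C (c 0) := by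
    refine X_pow_dvd_iff.mpr fun d hd => ?_
    rcases d with _ | d
    · simp [hcoeff, hkt.trans_le' hk.le]
    · simp [hcoeff, hmin (d + 1) (by omega) hd]
  refine ⟨q, hq, ?_⟩
  simpa [hcoeff, hkt, hk.ne', coeff_C, coeff_X_pow_mul'] using congrArg (coeff · k) hq.symm

theorem stmt_6 (p m s t n : ℕ) [Fact p.Prime]
    (hn : 0 < n)
    (δc : ℕ → GaloisField p m)
    (δ00 : GaloisField p m) (hδ00 : δ00 ^ p ^ s = δc 0)
    (k : ℕ) (hk1 : 1 ≤ k) (hkt : k ≤ t - 1) (hδk : δc k ≠ 0)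
    (hkmin : ∀ j, 1 ≤ j → j < k → δc j = 0) :
    (mkQr p m t (n * p ^ s)
        (mkRt p m t (∑ i ∈ Finset.range t, C (δc i) * X ^ i))
        (X ^ n - C (κ p m t δ00))) ^ ((t + k - 1) / k * p ^ s) = 0 ∧
    (mkQr p m t (n * p ^ s)
        (mkRt p m t (∑ i ∈ Finset.range t, C (δc i) * X ^ i))
        (X ^ n - C (κ p m t δ00))) ^ ((t + k - 1) / k * p ^ s - 1) ≠ 0 := by
  have := charP_quotient_span_X_pow (K := GaloisField p m) p (t := t) (by omega)
  obtain ⟨q, hq, hq0⟩ := sum_C_mul_X_pow_sub_C_eq_X_pow_mul δc (t := t) hk1 (by omega) hkmin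
  have hw (j : ℕ) :
      (mkRt p m t (∑ i ∈ Finset.range t, C (δc i) * X ^ i) - κ p m t δ00 ^ p ^ s) ^ j = 0 ↔
        (t + k - 1) / k ≤ j := by
    rw [← map_pow, hδ00, κ, RingHom.comp_apply, ← map_sub, hq, ← Nat.ceilDiv_eq_add_pred_div,
      ceilDiv_le_iff_le_smul hk1, smul_eq_mul]
    exact mk_X_pow_mul_pow_eq_zero_iff (hq0 ▸ hδk.isUnit)
  have hps : 0 < p ^ s := pow_pos (Fact.out : p.Prime).pos s
  obtain ⟨c, hc⟩ : ∃ c, (t + k - 1) / k = c + 1 := ⟨(t + k - 1) / k - 1, by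
    have := (Nat.one_le_div_iff hk1).mpr (show k ≤ t + k - 1 by omega); omega⟩
  rw [hc]
  refine ⟨?_, fun h => ?_⟩
  · exact (mk_X_pow_sub_C_pow_eq_zero_iff p hn _ _ (j := c + 1) hps).mpr ((hw _).mpr hc.le)
  · have hexp : (c + 1) * p ^ s - 1 = c * p ^ s + (p ^ s - 1) := by rw [Nat.succ_mul]; omega
    rw [hexp] at h
    exact absurd ((hw c).mp ((mk_X_pow_sub_C_pow_eq_zero_iff p hn _ _ (by omega)).mp h)) (by omega)
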